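/- arXiv:2405.20495 — 4 statements merged into one kernel-verified Lean document; each statement's English description precedes it below -/
import Mathlib

section
/- (Suboptimality-gap decomposition, Δ₁ bound.) Let ρ* maximize E_{τ∼ρ}[r(τ)] over distributions ρ on a finite set Y, and let ρ_BL be the Gibbs distribution ρ_sft(y)·exp(r(y)/β)/Z. Then max_ρ E_{τ∼ρ}[r(τ)] − E_{τ∼ρ_BL}[r(τ)] ≤ β·KL(ρ* ‖ ρ_sft), where ρ* is any maximizer of the unregularized expected reward. -/
/-!
Write `g = q · exp (r / β) / Z` for the Gibbs distribution. Since `log (q / g) = log Z - r / β`,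
every distribution `p` satisfies `β · KL(p ‖ g) = β · KL(p ‖ q) - E_p[r] + β · log Z`.
Gibbs' inequality `KL ≥ 0` applied at `p = ρ*` gives `E_{ρ*}[r] ≤ β · KL(ρ* ‖ q) + β · log Z`,
and at `p = g` (where `KL(g ‖ g) = 0`) it gives `β · log Z ≤ E_g[r]`.
-/

open Real Finset

/-- KL divergence between finite pmfs. -/
noncomputable def KLdiv {Y : Type*} [Fintype Y] (p q : Y → ℝ) : ℝ :=
  ∑ y, p y * Real.log (p y / q y)

lemma sub_le_mul_log_div {a b : ℝ} (ha : 0 < a) (hb : 0 ≤ b) :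
    b - a ≤ b * log (b / a) := by
  rcases hb.eq_or_lt with rfl | hb
  · simpa using ha.le
  · calc b - a = b * (1 - (b / a)⁻¹) := by field_simp
      _ ≤ b * log (b / a) :=
        mul_le_mul_of_nonneg_left (one_sub_inv_le_log_of_pos (div_pos hb ha)) hb.le

section KLdiv

variable {Y : Type*} [Fintype Y]

lemma sum_sub_sum_le_KLdiv {p q : Y → ℝ} (hp : ∀ y, 0 ≤ p y) (hq : ∀ y, 0 < q y) :
    ∑ y, p y - ∑ y, q y ≤ KLdiv p q := by
  rw [← sum_sub_distrib]
  exact sum_le_sum fun y _ ↦ sub_le_mul_log_div (hq y) (hp y)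

lemma KLdiv_nonneg {p q : Y → ℝ} (hp : ∀ y, 0 ≤ p y) (hq : ∀ y, 0 < q y)
    (hpq : ∑ y, p y = ∑ y, q y) : 0 ≤ KLdiv p q := by
  simpa [hpq] using sum_sub_sum_le_KLdiv hp hq

@[simp]
lemma KLdiv_self (p : Y → ℝ) : KLdiv p p = 0 := by
  simp [KLdiv]

end KLdiv

section Gibbs

variable {Y : Type*} {q r g : Y → ℝ} {β Z : ℝ}

lemma mul_log_div_gibbs (hq : ∀ y, 0 < q y) (hZ : 0 < Z)
    (hg : ∀ y, g y = q y * exp (r y / β) / Z) (p : Y → ℝ) (y : Y) :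
    p y * log (p y / g y) = p y * log (p y / q y) + p y * (log Z - r y / β) := by
  rcases eq_or_ne (p y) 0 with hp | hp
  · simp [hp]
  · have hsplit : p y / g y = p y / q y * (Z / exp (r y / β)) := by
      rw [hg y]
      field_simp [(hq y).ne']
    rw [hsplit, log_mul (div_ne_zero hp (hq y).ne') (div_pos hZ (exp_pos _)).ne',
      log_div hZ.ne' (exp_pos _).ne', log_exp, mul_add]

variable [Fintype Y]

/-- The Gibbs variational identity (Donsker–Varadhan). -/
lemma mul_KLdiv_gibbs (hq : ∀ y, 0 < q y) (hβ : β ≠ 0) (hZ : 0 < Z)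
    (hg : ∀ y, g y = q y * exp (r y / β) / Z) {p : Y → ℝ} (hp : ∑ y, p y = 1) :
    β * KLdiv p g = β * KLdiv p q - ∑ y, p y * r y + β * log Z := by
  have hsum : KLdiv p g = KLdiv p q + log Z - ∑ y, p y * r y / β := by
    simp only [KLdiv, mul_log_div_gibbs hq hZ hg, sum_add_distrib, mul_sub, sum_sub_distrib,
      ← sum_mul, hp, one_mul, mul_div_assoc']
    ring
  rw [hsum, ← sum_div]
  field_simp
  ring

variable [Nonempty Y]

lemma gibbs_normalizer_pos (hq : ∀ y, 0 < q y) : 0 < ∑ y, q y * exp (r y / β) :=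
  sum_pos (fun y _ ↦ mul_pos (hq y) (exp_pos _)) univ_nonempty

lemma gibbs_pos (hq : ∀ y, 0 < q y) (hZ : Z = ∑ y, q y * exp (r y / β))
    (hg : ∀ y, g y = q y * exp (r y / β) / Z) (y : Y) : 0 < g y := by
  rw [hg y, hZ]
  exact div_pos (mul_pos (hq y) (exp_pos _)) (gibbs_normalizer_pos hq)

lemma sum_gibbs (hq : ∀ y, 0 < q y) (hZ : Z = ∑ y, q y * exp (r y / β))
    (hg : ∀ y, g y = q y * exp (r y / β) / Z) : ∑ y, g y = 1 := by
  simp only [hg, ← sum_div, ← hZ]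
  exact div_self (hZ ▸ gibbs_normalizer_pos hq).ne'

lemma expectation_le_mul_KLdiv_add_mul_log (hq : ∀ y, 0 < q y) (hβ : 0 < β)
    (hZ : Z = ∑ y, q y * exp (r y / β)) (hg : ∀ y, g y = q y * exp (r y / β) / Z)
    {p : Y → ℝ} (hp0 : ∀ y, 0 ≤ p y) (hp1 : ∑ y, p y = 1) :
    ∑ y, p y * r y ≤ β * KLdiv p q + β * log Z := by
  have hKL : 0 ≤ KLdiv p g :=
    KLdiv_nonneg hp0 (gibbs_pos hq hZ hg) (by rw [hp1, sum_gibbs hq hZ hg])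
  have hidentity := mul_KLdiv_gibbs hq hβ.ne' (hZ ▸ gibbs_normalizer_pos hq) hg hp1
  linarith [mul_nonneg hβ.le hKL]

lemma mul_log_le_expectation_gibbs (hq : ∀ y, 0 < q y) (hq1 : ∑ y, q y = 1) (hβ : 0 < β)
    (hZ : Z = ∑ y, q y * exp (r y / β)) (hg : ∀ y, g y = q y * exp (r y / β) / Z) :
    β * log Z ≤ ∑ y, g y * r y := by
  have hg1 := sum_gibbs hq hZ hg
  have hKL : 0 ≤ KLdiv g q :=
    KLdiv_nonneg (fun y ↦ (gibbs_pos hq hZ hg y).le) hq (by rw [hg1, hq1])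
  have hidentity := mul_KLdiv_gibbs hq hβ.ne' (hZ ▸ gibbs_normalizer_pos hq) hg hg1
  rw [KLdiv_self, mul_zero] at hidentity
  linarith [mul_nonneg hβ.le hKL]

end Gibbs

theorem stmt5_delta1_gibbs_bound_general
    {Y : Type*} [Fintype Y] [Nonempty Y]
    (rhosft : Y → ℝ) (hpos : ∀ y, 0 < rhosft y) (hsum : ∑ y, rhosft y = 1)
    (r : Y → ℝ) (β : ℝ) (hβ : 0 < β)
    (Z : ℝ) (hZ : Z = ∑ y, rhosft y * Real.exp (r y / β))
    (rhoBL : Y → ℝ) (hBL : ∀ y, rhoBL y = rhosft y * Real.exp (r y / β) / Z)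
    (rhostar : Y → ℝ) (hstarnn : ∀ y, 0 ≤ rhostar y) (hstarsum : ∑ y, rhostar y = 1) :
    (∑ y, rhostar y * r y) - (∑ y, rhoBL y * r y) ≤ β * KLdiv rhostar rhosft := by
  have hupper := expectation_le_mul_KLdiv_add_mul_log hpos hβ hZ hBL hstarnn hstarsum
  have hlower := mul_log_le_expectation_gibbs hpos hsum hβ hZ hBL
  linarith

/-- Δ₁ bound: with `ρ*` any maximizer of the unregularized expected reward and
`ρ_BL` the Gibbs distribution, `max_ρ E_ρ[r] − E_{ρ_BL}[r] ≤ β · KL(ρ* ‖ ρ_sft)`.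
(The maximum of the expected reward over pmfs is attained by `ρ*`.) -/
theorem stmt5_delta1_gibbs_bound
    {Y : Type*} [Fintype Y] [Nonempty Y]
    (rhosft : Y → ℝ) (hpos : ∀ y, 0 < rhosft y) (hsum : ∑ y, rhosft y = 1)
    (r : Y → ℝ) (β : ℝ) (hβ : 0 < β)
    (Z : ℝ) (hZ : Z = ∑ y, rhosft y * Real.exp (r y / β))
    (rhoBL : Y → ℝ) (hBL : ∀ y, rhoBL y = rhosft y * Real.exp (r y / β) / Z)
    (rhostar : Y → ℝ) (hstarnn : ∀ y, 0 ≤ rhostar y) (hstarsum : ∑ y, rhostar y = 1)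
    (hstaropt : ∀ rho : Y → ℝ, (∀ y, 0 ≤ rho y) → (∑ y, rho y = 1) →
        (∑ y, rho y * r y) ≤ ∑ y, rhostar y * r y) :
    (∑ y, rhostar y * r y) - (∑ y, rhoBL y * r y) ≤ β * KLdiv rhostar rhosft :=
  stmt5_delta1_gibbs_bound_general rhosft hpos hsum r β hβ Z hZ rhoBL hBL rhostar hstarnn hstarsum
end

section
/- (KL-efficiency bound, Theorem 1 statement 2 for T = 1.) Let ρ_sft be fully supported on a finite set Y, 0 ≤ r ≤ R_max, β > 0, α > 0. Define ρ_BL(y) = ρ_sft(y)·exp(r(y)/β)/Z_β and ρ_alg(y) = ρ_BL(y)·exp(Q(y)/α)/C_α where 0 ≤ Q(y) ≤ R_max and C_α is the normalizer. Then KL(ρ_alg ‖ ρ_sft) ≤ (1/β + 1/α)·R_max. -/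
open Real Finset

/-- KL-efficiency (T = 1): with `ρ_BL` the β-tilt of `ρ_sft` by `r` and `ρ_alg` the
α-tilt of `ρ_BL` by `Q`, `0 ≤ r, Q ≤ R_max`, we have
`KL(ρ_alg ‖ ρ_sft) ≤ (1/β + 1/α) · R_max`. -/
theorem stmt9_kl_efficiency_T1
    {Y : Type*} [Fintype Y] [Nonempty Y]
    (rhosft : Y → ℝ) (hpos : ∀ y, 0 < rhosft y) (hsum : ∑ y, rhosft y = 1)
    (r Q : Y → ℝ) (Rmax : ℝ)
    (hr0 : ∀ y, 0 ≤ r y) (hrmax : ∀ y, r y ≤ Rmax)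
    (hQ0 : ∀ y, 0 ≤ Q y) (hQmax : ∀ y, Q y ≤ Rmax)
    (β α : ℝ) (hβ : 0 < β) (hα : 0 < α)
    (Zβ : ℝ) (hZ : Zβ = ∑ y, rhosft y * Real.exp (r y / β))
    (rhoBL : Y → ℝ) (hBL : ∀ y, rhoBL y = rhosft y * Real.exp (r y / β) / Zβ)
    (Cα : ℝ) (hCα : Cα = ∑ y, rhoBL y * Real.exp (Q y / α))
    (rhoalg : Y → ℝ) (halg : ∀ y, rhoalg y = rhoBL y * Real.exp (Q y / α) / Cα) :
    KLdiv rhoalg rhosft ≤ (1 / β + 1 / α) * Rmax := by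
  have hZ1 : 1 ≤ Zβ := by
    rw [hZ, ← hsum]
    apply Finset.sum_le_sum
    intro y _
    nlinarith [(hpos y), Real.one_le_exp (div_nonneg (hr0 y) hβ.le)]
  have hZpos : 0 < Zβ := lt_of_lt_of_le one_pos hZ1
  have hBLpos : ∀ y, 0 < rhoBL y := fun y => by
    rw [hBL]; have := hpos y; positivity
  have hBLsum : ∑ y, rhoBL y = 1 := by
    simp only [hBL, div_eq_mul_inv, ← Finset.sum_mul, ← hZ]
    field_simp
    exact hZ.symm
  have hC1 : 1 ≤ Cα := by
    rw [hCα, ← hBLsum]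
    apply Finset.sum_le_sum
    intro y _
    nlinarith [(hBLpos y), Real.one_le_exp (div_nonneg (hQ0 y) hα.le)]
  have hCpos : 0 < Cα := lt_of_lt_of_le one_pos hC1
  have halgpos : ∀ y, 0 < rhoalg y := fun y => by
    rw [halg]; have := hBLpos y; positivity
  have halgsum : ∑ y, rhoalg y = 1 := by
    simp only [halg, div_eq_mul_inv, ← Finset.sum_mul, ← hCα]
    field_simp
    exact hCα.symm
  have key : ∀ y, Real.log (rhoalg y / rhosft y) ≤ (1 / β + 1 / α) * Rmax := by
    intro y
    have hratio : rhoalg y / rhosft y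
        = Real.exp (r y / β) * Real.exp (Q y / α) / (Zβ * Cα) := by
      have hy := (hpos y).ne'
      rw [halg, hBL]
      field_simp
    rw [hratio, Real.log_div (by positivity) (by positivity),
      Real.log_mul (Real.exp_ne_zero _) (Real.exp_ne_zero _),
      Real.log_mul (ne_of_gt hZpos) (ne_of_gt hCpos),
      Real.log_exp, Real.log_exp]
    have h1 : 0 ≤ Real.log Zβ := Real.log_nonneg hZ1
    have h2 : 0 ≤ Real.log Cα := Real.log_nonneg hC1
    have h3 : r y / β ≤ Rmax / β := by gcongr; exact hrmax y
    have h4 : Q y / α ≤ Rmax / α := by gcongr; exact hQmax y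
    have h5 : (1 / β + 1 / α) * Rmax = Rmax / β + Rmax / α := by ring
    linarith
  calc KLdiv rhoalg rhosft ≤ ∑ y, rhoalg y * ((1 / β + 1 / α) * Rmax) := by
        apply Finset.sum_le_sum
        intro y _
        exact mul_le_mul_of_nonneg_left (key y) (halgpos y).le
    _ = (1 / β + 1 / α) * Rmax := by rw [← Finset.sum_mul, halgsum, one_mul]
end

section
/- (Two-step suboptimality bound, Theorem 1 statement 1 for T = 1.) Let Y be finite, ρ_sft fully supported on Y, r : Y → ℝ, α, β > 0. Let ρ_BL(y) ∝ ρ_sft(y)·exp(r(y)/β) and ρ_alg(y) ∝ ρ_BL(y)·exp(r(y)/α). Let ρ* be a maximizer of E_{τ∼ρ}[r(τ)]. Then max_y r(y) − E_{τ∼ρ_alg}[r(τ)] ≤ β·KL(ρ* ‖ ρ_sft) − α·KL(ρ_alg ‖ ρ_BL). -/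
open Real Finset

lemma gibbs_aux {Y : Type*} [Fintype Y] (p q : Y → ℝ)
    (hp : ∀ y, 0 ≤ p y) (hq : ∀ y, 0 < q y)
    (hps : ∑ y, p y = 1) (hqs : ∑ y, q y = 1) :
    0 ≤ KLdiv p q := by
  have h : ∀ y, p y - q y ≤ p y * Real.log (p y / q y) := by
    intro y
    rcases eq_or_lt_of_le (hp y) with h0 | h0
    · simp [← h0]; linarith [(hq y).le]
    · have hd : 0 < q y / p y := div_pos (hq y) h0
      have hlog := Real.log_le_sub_one_of_pos hd
      have hneg : Real.log (q y / p y) = - Real.log (p y / q y) := by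
        rw [← Real.log_inv, inv_div]
      rw [hneg] at hlog
      have key : p y * (q y / p y - 1) = q y - p y := by field_simp
      have := mul_le_mul_of_nonneg_left hlog h0.le
      rw [key] at this
      nlinarith
  have : ∑ y, (p y - q y) ≤ ∑ y, p y * Real.log (p y / q y) :=
    Finset.sum_le_sum (fun y _ => h y)
  rw [Finset.sum_sub_distrib, hps, hqs] at this
  simpa [KLdiv] using this

/-- Log-ratio identity for exponentially tilted distributions. -/
lemma tilt_log {Y : Type*} [Fintype Y] (p q r : Y → ℝ) (c Z : ℝ)
    (hc : 0 < c) (hZ : 0 < Z) (hp : ∀ y, 0 < p y)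
    (hq : ∀ y, q y = p y * Real.exp (r y / c) / Z) (y : Y) :
    Real.log (q y / p y) = r y / c - Real.log Z := by
  have hpne : p y ≠ 0 := (hp y).ne'
  have : q y / p y = Real.exp (r y / c) / Z := by
    rw [hq y]; field_simp
  rw [this, Real.log_div (Real.exp_pos _).ne' hZ.ne', Real.log_exp]

/-- Two-step suboptimality bound (T = 1):
`max_y r(y) − E_{ρ_alg}[r] ≤ β·KL(ρ* ‖ ρ_sft) − α·KL(ρ_alg ‖ ρ_BL)`. -/
theorem stmt13_two_step_suboptimality
    {Y : Type*} [Fintype Y] [Nonempty Y]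
    (rhosft : Y → ℝ) (hpos : ∀ y, 0 < rhosft y) (hsum : ∑ y, rhosft y = 1)
    (r : Y → ℝ) (α β : ℝ) (hα : 0 < α) (hβ : 0 < β)
    (Zβ : ℝ) (hZ : Zβ = ∑ y, rhosft y * Real.exp (r y / β))
    (rhoBL : Y → ℝ) (hBL : ∀ y, rhoBL y = rhosft y * Real.exp (r y / β) / Zβ)
    (Cα : ℝ) (hCα : Cα = ∑ y, rhoBL y * Real.exp (r y / α))
    (rhoalg : Y → ℝ) (halg : ∀ y, rhoalg y = rhoBL y * Real.exp (r y / α) / Cα)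
    (rhostar : Y → ℝ) (hstarnn : ∀ y, 0 ≤ rhostar y) (hstarsum : ∑ y, rhostar y = 1)
    (hstaropt : ∀ rho : Y → ℝ, (∀ y, 0 ≤ rho y) → (∑ y, rho y = 1) →
        (∑ y, rho y * r y) ≤ ∑ y, rhostar y * r y) :
    (Finset.univ.sup' Finset.univ_nonempty r) - (∑ y, rhoalg y * r y) ≤
      β * KLdiv rhostar rhosft - α * KLdiv rhoalg rhoBL := by
  -- positivity of normalizers and distributions
  have hZpos : 0 < Zβ := by
    rw [hZ]
    exact Finset.sum_pos (fun y _ => mul_pos (hpos y) (Real.exp_pos _))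
      Finset.univ_nonempty
  have hBLpos : ∀ y, 0 < rhoBL y := fun y => by
    rw [hBL y]; exact div_pos (mul_pos (hpos y) (Real.exp_pos _)) hZpos
  have hBLsum : ∑ y, rhoBL y = 1 := by
    simp only [hBL]
    rw [← Finset.sum_div, ← hZ, div_self hZpos.ne']
  have hCpos : 0 < Cα := by
    rw [hCα]
    exact Finset.sum_pos (fun y _ => mul_pos (hBLpos y) (Real.exp_pos _))
      Finset.univ_nonempty
  have halgpos : ∀ y, 0 < rhoalg y := fun y => by
    rw [halg y]; exact div_pos (mul_pos (hBLpos y) (Real.exp_pos _)) hCpos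
  have halgsum : ∑ y, rhoalg y = 1 := by
    simp only [halg]
    rw [← Finset.sum_div, ← hCα, div_self hCpos.ne']
  set SBL := ∑ y, rhoBL y * r y with hSBL
  set Salg := ∑ y, rhoalg y * r y with hSalg
  set Sstar := ∑ y, rhostar y * r y with hSstar
  -- log-ratio identities
  have hlogBL : ∀ y, Real.log (rhoBL y / rhosft y) = r y / β - Real.log Zβ :=
    tilt_log rhosft rhoBL r β Zβ hβ hZpos hpos hBL
  have hlogalg : ∀ y, Real.log (rhoalg y / rhoBL y) = r y / α - Real.log Cα :=
    tilt_log rhoBL rhoalg r α Cα hα hCpos hBLpos halg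
  -- KL identities
  have sum_helper : ∀ (p S : Y → ℝ) (c L : ℝ), (∑ y, p y = 1) →
      (∀ y, Real.log (S y) = r y / c - L) →
      ∑ y, p y * Real.log (S y) = (∑ y, p y * r y) / c - L := by
    intro p S c L hps hlog
    calc ∑ y, p y * Real.log (S y) = ∑ y, (p y * (r y / c) - p y * L) := by
          refine Finset.sum_congr rfl fun y _ => ?_
          rw [hlog y]; ring
      _ = (∑ y, p y * r y) / c - L := by
          rw [Finset.sum_sub_distrib, ← Finset.sum_mul, hps, one_mul,
            Finset.sum_div]
          congr 1
          exact Finset.sum_congr rfl fun y _ => by ring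
  have I1 : KLdiv rhoalg rhoBL = Salg / α - Real.log Cα :=
    sum_helper rhoalg (fun y => rhoalg y / rhoBL y) α (Real.log Cα) halgsum hlogalg
  have I3 : KLdiv rhoBL rhosft = SBL / β - Real.log Zβ :=
    sum_helper rhoBL (fun y => rhoBL y / rhosft y) β (Real.log Zβ) hBLsum hlogBL
  -- KL(rhoBL ‖ rhoalg) identity
  have I2 : KLdiv rhoBL rhoalg = Real.log Cα - SBL / α := by
    have hlog' : ∀ y, Real.log (rhoBL y / rhoalg y) = -(r y / α - Real.log Cα) := by
      intro y
      rw [← hlogalg y, ← Real.log_inv, inv_div]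
    have : KLdiv rhoBL rhoalg = ∑ y, (rhoBL y * Real.log Cα - rhoBL y * (r y / α)) := by
      refine Finset.sum_congr rfl fun y _ => ?_
      rw [hlog' y]; ring
    rw [KLdiv] at *
    rw [this, Finset.sum_sub_distrib, ← Finset.sum_mul, hBLsum, one_mul]
    congr 1
    rw [Finset.sum_div]
    exact Finset.sum_congr rfl fun y _ => by ring
  -- decomposition of KL(rhostar ‖ rhosft)
  have D : KLdiv rhostar rhosft = KLdiv rhostar rhoBL + Sstar / β - Real.log Zβ := by
    have h : ∀ y, rhostar y * Real.log (rhostar y / rhosft y) =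
        rhostar y * Real.log (rhostar y / rhoBL y) +
          (rhostar y * (r y / β) - rhostar y * Real.log Zβ) := by
      intro y
      rcases eq_or_lt_of_le (hstarnn y) with h0 | h0
      · simp [← h0]
      · have hsplit : rhostar y / rhosft y =
            (rhostar y / rhoBL y) * (rhoBL y / rhosft y) := by
          rw [div_mul_div_comm, mul_comm (rhostar y) (rhoBL y),
            mul_div_mul_left _ _ (hBLpos y).ne']
        rw [hsplit, Real.log_mul (div_pos h0 (hBLpos y)).ne'
          (div_pos (hBLpos y) (hpos y)).ne', hlogBL y]
        ring
    rw [KLdiv, KLdiv]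
    calc ∑ y, rhostar y * Real.log (rhostar y / rhosft y)
        = ∑ y, (rhostar y * Real.log (rhostar y / rhoBL y) +
          (rhostar y * (r y / β) - rhostar y * Real.log Zβ)) :=
          Finset.sum_congr rfl fun y _ => h y
      _ = _ := by
          rw [Finset.sum_add_distrib, Finset.sum_sub_distrib, ← Finset.sum_mul,
            hstarsum, one_mul]
          have : ∑ y, rhostar y * (r y / β) = Sstar / β := by
            rw [hSstar, Finset.sum_div]
            exact Finset.sum_congr rfl fun y _ => by ring
          rw [this]; ring
  -- Gibbs inequalities
  have G1 : 0 ≤ KLdiv rhostar rhoBL := gibbs_aux _ _ hstarnn hBLpos hstarsum hBLsum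
  have G2 : 0 ≤ KLdiv rhoBL rhosft :=
    gibbs_aux _ _ (fun y => (hBLpos y).le) hpos hBLsum hsum
  have G3 : 0 ≤ KLdiv rhoBL rhoalg :=
    gibbs_aux _ _ (fun y => (hBLpos y).le) halgpos hBLsum halgsum
  -- max r ≤ Sstar
  have hmax : (Finset.univ.sup' Finset.univ_nonempty r) ≤ Sstar := by
    classical
    apply Finset.sup'_le
    intro y _
    have := hstaropt (fun y' => if y' = y then (1:ℝ) else 0)
      (fun y' => by split <;> norm_num) (by simp)
    simpa [Finset.sum_ite_eq'] using this
  -- combine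
  have h2 : SBL / β - Real.log Zβ ≥ 0 := by rw [← I3]; exact G2
  have h3 : Real.log Cα - SBL / α ≥ 0 := by rw [← I2]; exact G3
  have hD' : β * KLdiv rhostar rhosft =
      β * KLdiv rhostar rhoBL + Sstar - β * Real.log Zβ := by
    rw [D]; field_simp
  have hI1' : α * KLdiv rhoalg rhoBL = Salg - α * Real.log Cα := by
    rw [I1]; field_simp
  have h2' : β * Real.log Zβ ≤ SBL := by
    have h := (le_div_iff₀ hβ).mp (by linarith : Real.log Zβ ≤ SBL / β)
    linarith [h]
  have h3' : SBL ≤ α * Real.log Cα := by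
    have h := (div_le_iff₀ hα).mp (by linarith : SBL / α ≤ Real.log Cα)
    linarith [h]
  linarith [hmax, hD', hI1', mul_nonneg hβ.le G1, h2', h3']
end

section
/- (Monotonicity of the suboptimality bound in β at fixed ρ*.) Let Y be finite, ρ_sft fully supported, r : Y → ℝ bounded with 0 ≤ r ≤ R_max, and ρ_β the Gibbs distribution ρ_sft·exp(r/β)/Z_β. Then max_y r(y) − E_{τ∼ρ_β}[r(τ)] ≤ β·log(1/min_y ρ_sft(y)); in particular the gap is at most β·log|Y| when ρ_sft is uniform. -/
open Real Finset

/-- Gap bound: `max_y r(y) − E_{ρ_β}[r] ≤ β·log(1 / min_y ρ_sft(y))`; in particular,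
when `ρ_sft` is uniform, the gap is at most `β·log |Y|`. -/
theorem stmt18_gap_bound
    {Y : Type*} [Fintype Y] [Nonempty Y]
    (rhosft : Y → ℝ) (hpos : ∀ y, 0 < rhosft y) (hsum : ∑ y, rhosft y = 1)
    (r : Y → ℝ) (Rmax : ℝ) (hr0 : ∀ y, 0 ≤ r y) (hrmax : ∀ y, r y ≤ Rmax)
    (β : ℝ) (hβ : 0 < β)
    (Zβ : ℝ) (hZ : Zβ = ∑ y, rhosft y * Real.exp (r y / β))
    (rhoβ : Y → ℝ) (hρ : ∀ y, rhoβ y = rhosft y * Real.exp (r y / β) / Zβ) :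
    (Finset.univ.sup' Finset.univ_nonempty r) - (∑ y, rhoβ y * r y) ≤
        β * Real.log (1 / (Finset.univ.inf' Finset.univ_nonempty rhosft)) ∧
    ((∀ y, rhosft y = 1 / (Fintype.card Y : ℝ)) →
      (Finset.univ.sup' Finset.univ_nonempty r) - (∑ y, rhoβ y * r y) ≤
        β * Real.log (Fintype.card Y : ℝ)) := by
  have hZpos : 0 < Zβ := by
    rw [hZ]
    exact Finset.sum_pos (fun y _ => mul_pos (hpos y) (Real.exp_pos _)) Finset.univ_nonempty
  have hρpos : ∀ y, 0 < rhoβ y := fun y => by rw [hρ]; exact div_pos (mul_pos (hpos y) (Real.exp_pos _)) hZpos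
  have hρsum : ∑ y, rhoβ y = 1 := by
    simp only [hρ]
    rw [← Finset.sum_div, ← hZ, div_self (ne_of_gt hZpos)]
  set m := Finset.univ.inf' Finset.univ_nonempty rhosft with hm
  have hmpos : 0 < m := by
    obtain ⟨y, -, hy⟩ := Finset.exists_mem_eq_inf' Finset.univ_nonempty rhosft
    rw [hm, hy]; exact hpos y
  -- Step A : β * log Zβ ≤ E[r]
  have hA : β * Real.log Zβ ≤ ∑ y, rhoβ y * r y := by
    have key : ∑ y, rhoβ y * (Real.log Zβ - r y / β) ≤ 0 := by
      have h1 : ∀ y, rhoβ y * (Real.log Zβ - r y / β) ≤ rhosft y - rhoβ y := by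
        intro y
        have hq : rhosft y / rhoβ y = Zβ * Real.exp (-(r y / β)) := by
          rw [hρ y, Real.exp_neg]
          field_simp [ne_of_gt (hpos y), Real.exp_ne_zero]
        have hlogq : Real.log (rhosft y / rhoβ y) = Real.log Zβ - r y / β := by
          rw [hq, Real.log_mul (ne_of_gt hZpos) (Real.exp_ne_zero _), Real.log_exp]
          ring
        have hle : Real.log (rhosft y / rhoβ y) ≤ rhosft y / rhoβ y - 1 :=
          Real.log_le_sub_one_of_pos (div_pos (hpos y) (hρpos y))
        rw [hlogq] at hle
        have := mul_le_mul_of_nonneg_left hle (le_of_lt (hρpos y))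
        calc rhoβ y * (Real.log Zβ - r y / β)
            ≤ rhoβ y * (rhosft y / rhoβ y - 1) := this
          _ = rhosft y - rhoβ y := by
              field_simp [ne_of_gt (hρpos y)]
      calc ∑ y, rhoβ y * (Real.log Zβ - r y / β)
          ≤ ∑ y, (rhosft y - rhoβ y) := Finset.sum_le_sum (fun y _ => h1 y)
        _ = 0 := by rw [Finset.sum_sub_distrib, hsum, hρsum]; ring
    have hexp : ∑ y, rhoβ y * (Real.log Zβ - r y / β) =
        Real.log Zβ - (∑ y, rhoβ y * r y) / β := by
      have hdiv : ∑ y, rhoβ y * (r y / β) = (∑ y, rhoβ y * r y) / β := by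
        rw [Finset.sum_div]; exact Finset.sum_congr rfl (fun y _ => by ring)
      simp only [mul_sub]
      rw [Finset.sum_sub_distrib, ← Finset.sum_mul, hρsum, one_mul, hdiv]
    rw [hexp] at key
    rw [mul_comm]
    rw [sub_nonpos] at key
    calc Real.log Zβ * β ≤ ((∑ y, rhoβ y * r y) / β) * β := by
          exact mul_le_mul_of_nonneg_right key (le_of_lt hβ)
      _ = ∑ y, rhoβ y * r y := by field_simp
  -- Step B : sup r ≤ β log Zβ + β log (1/m)
  have hB : (Finset.univ.sup' Finset.univ_nonempty r) ≤
      β * Real.log Zβ + β * Real.log (1 / m) := by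
    apply Finset.sup'_le
    intro y _
    have hterm : rhosft y * Real.exp (r y / β) ≤ Zβ := by
      rw [hZ]
      exact Finset.single_le_sum (f := fun y => rhosft y * Real.exp (r y / β))
        (fun i _ => le_of_lt (mul_pos (hpos i) (Real.exp_pos _))) (Finset.mem_univ y)
    have hexp : Real.exp (r y / β) ≤ Zβ / rhosft y := by
      rw [le_div_iff₀ (hpos y)]
      linarith [hterm, mul_comm (rhosft y) (Real.exp (r y / β))]
    have hlog : r y / β ≤ Real.log Zβ - Real.log (rhosft y) := by
      have := Real.log_le_log (Real.exp_pos _) hexp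
      rwa [Real.log_exp, Real.log_div (ne_of_gt hZpos) (ne_of_gt (hpos y))] at this
    have hmin : Real.log m ≤ Real.log (rhosft y) :=
      Real.log_le_log hmpos (Finset.inf'_le _ (Finset.mem_univ y))
    have h1m : Real.log (1 / m) = - Real.log m := by
      rw [one_div, Real.log_inv]
    rw [h1m]
    have : r y / β ≤ Real.log Zβ - Real.log m := by linarith
    have := mul_le_mul_of_nonneg_left this (le_of_lt hβ)
    rw [mul_div_cancel₀ _ (ne_of_gt hβ)] at this
    linarith [this]
  constructor
  · linarith
  · intro hu
    have hmeq : m = 1 / (Fintype.card Y : ℝ) := by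
      rw [hm]
      obtain ⟨y, -, hy⟩ := Finset.exists_mem_eq_inf' Finset.univ_nonempty rhosft
      rw [hy, hu y]
    have hcard : (0:ℝ) < Fintype.card Y := by exact_mod_cast Fintype.card_pos
    have : (1 : ℝ) / m = (Fintype.card Y : ℝ) := by
      rw [hmeq, one_div_one_div]
    linarith [this ▸ hB, hA]
end
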